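/- For the quasi-Kähler Lie group example, the curvature tensor R̃ of the associated metric g̃ has components satisfying R̃₁₂₂₁ = −R̃₁₄₄₁ = −R̃₂₃₃₂ = R̃₃₄₄₃ = λ₁λ₃ + λ₂λ₄, R̃₁₃₃₁ = −½λ₂λ₄, and R̃₂₄₄₂ = −½λ₁λ₃. -/

import Mathlib

noncomputable section

/-- The standard basis of `ℝ⁴` (denoted `X₁,…,X₄` in the paper). -/
def e (i : Fin 4) : Fin 4 → ℝ := Pi.single i 1

/-- The almost complex structure: `J X₁ = X₃, J X₂ = X₄, J X₃ = −X₁, J X₄ = −X₂`. -/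
def Jm (x : Fin 4 → ℝ) : Fin 4 → ℝ := ![-(x 2), -(x 3), x 0, x 1]

/-- The Norden metric `g = diag(1,1,−1,−1)`. -/
def gm (x y : Fin 4 → ℝ) : ℝ := x 0 * y 0 + x 1 * y 1 - x 2 * y 2 - x 3 * y 3

/-- The associated Norden metric `g̃(x,y) = g(x,Jy)`. -/
def gt (x y : Fin 4 → ℝ) : ℝ := gm x (Jm y)

/-- The bracket of the 4-parametric family of Lie algebras:
`[X₁,X₃]=λ₂X₂+λ₄X₄`, `[X₂,X₄]=λ₁X₁+λ₃X₃`, `[X₂,X₃]=−λ₂X₁−λ₃X₄`,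
`[X₃,X₄]=−λ₄X₁+λ₃X₂`, `[X₄,X₁]=λ₁X₂+λ₄X₃`, `[X₂,X₁]=−λ₂X₃+λ₁X₄`,
extended bilinearly and skew-symmetrically (here with 0-based indices). -/
def br (l1 l2 l3 l4 : ℝ) (x y : Fin 4 → ℝ) : Fin 4 → ℝ :=
  ![ -l2*(x 1*y 2 - x 2*y 1) + l1*(x 1*y 3 - x 3*y 1) - l4*(x 2*y 3 - x 3*y 2),
      l2*(x 0*y 2 - x 2*y 0) - l1*(x 0*y 3 - x 3*y 0) + l3*(x 2*y 3 - x 3*y 2),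
      l2*(x 0*y 1 - x 1*y 0) - l4*(x 0*y 3 - x 3*y 0) + l3*(x 1*y 3 - x 3*y 1),
     -l1*(x 0*y 1 - x 1*y 0) + l4*(x 0*y 2 - x 2*y 0) - l3*(x 1*y 2 - x 2*y 1) ]

/-- The Levi-Civita connection of `g`: `∇_x y = ½[x,y]`. -/
def nab (l1 l2 l3 l4 : ℝ) (x y : Fin 4 → ℝ) : Fin 4 → ℝ :=
  ((1 : ℝ)/2) • br l1 l2 l3 l4 x y

/-- The matrix of `g` in the standard basis. -/
def G : Matrix (Fin 4) (Fin 4) ℝ := fun i j => gm (e i) (e j)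

/-- The matrix of `g̃` in the standard basis. -/
def Gt : Matrix (Fin 4) (Fin 4) ℝ := fun i j => gt (e i) (e j)

/-!
The Koszul formula expresses a torsion-free connection compatible with a metric through the
bracket alone, and `g̃` is nondegenerate (`g̃(w, X_{k+2}) = -w_k`), so `∇̃` is given explicitly,
quadratically in the structure constants. The curvature components are then polynomial identities
in `λ₁, …, λ₄`.
-/

theorem koszul_formula {R V : Type*} [CommRing R] [AddCommGroup V]
    (B : V → V → R) (hB_symm : ∀ u v, B u v = B v u)
    (hB_sub : ∀ u v w, B (u - v) w = B u w - B v w)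
    (bracket nabla : V → V → V)
    (htor : ∀ x y, nabla x y - nabla y x = bracket x y)
    (hmet : ∀ x y z, B (nabla x y) z + B y (nabla x z) = 0) (x y z : V) :
    2 * B (nabla x y) z = B (bracket x y) z - B (bracket y z) x + B (bracket z x) y := by
  have hxy := hB_sub (nabla x y) (nabla y x) z
  have hyz := hB_sub (nabla y z) (nabla z y) x
  have hzx := hB_sub (nabla z x) (nabla x z) y
  rw [htor] at hxy hyz hzx
  have hx := hmet x y z
  have hy := hmet y z x
  have hz := hmet z x y
  rw [hB_symm y] at hx
  rw [hB_symm z] at hy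
  rw [hB_symm x] at hz
  linear_combination hx + hy - hz - hxy + hyz - hzx

theorem gt_symm (x y : Fin 4 → ℝ) : gt x y = gt y x := by
  simp only [gt, gm, Jm, Matrix.cons_val]
  ring

theorem gt_sub_left (x y z : Fin 4 → ℝ) : gt (x - y) z = gt x z - gt y z := by
  simp only [gt, gm, Pi.sub_apply]
  ring

theorem apply_eq_neg_gt_e_add_two (w : Fin 4 → ℝ) (k : Fin 4) : w k = -gt w (e (k + 2)) := by
  fin_cases k <;> simp [gt, gm, Jm, e]

def koszulConn (l1 l2 l3 l4 : ℝ) (x y : Fin 4 → ℝ) : Fin 4 → ℝ := fun k =>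
  -(1 / 2) * (gt (br l1 l2 l3 l4 x y) (e (k + 2)) - gt (br l1 l2 l3 l4 y (e (k + 2))) x
    + gt (br l1 l2 l3 l4 (e (k + 2)) x) y)

theorem eq_koszulConn (l1 l2 l3 l4 : ℝ) (nt : (Fin 4 → ℝ) → (Fin 4 → ℝ) → (Fin 4 → ℝ))
    (hnt_tor : ∀ x y, nt x y - nt y x = br l1 l2 l3 l4 x y)
    (hnt_met : ∀ x y z, gt (nt x y) z + gt y (nt x z) = 0) :
    nt = koszulConn l1 l2 l3 l4 := by
  funext x y k
  rw [apply_eq_neg_gt_e_add_two (nt x y), koszulConn,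
    ← koszul_formula gt gt_symm gt_sub_left _ nt hnt_tor hnt_met]
  ring

theorem stmt_16_general (l1 l2 l3 l4 : ℝ)
    -- `nt` is the Levi-Civita connection `∇̃` of the (left-invariant) metric `g̃`:
    -- the unique bilinear, torsion-free, `g̃`-compatible connection on the Lie algebra
    (nt : (Fin 4 → ℝ) → (Fin 4 → ℝ) → (Fin 4 → ℝ))
    (hnt_tor : ∀ x y, nt x y - nt y x = br l1 l2 l3 l4 x y)
    (hnt_met : ∀ x y z, gt (nt x y) z + gt y (nt x z) = 0)
    -- the (0,4)-curvature tensor `R̃(x,y,z,u) = g̃(R̃(x,y)z, u)` of `∇̃`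
    (Rt : (Fin 4 → ℝ) → (Fin 4 → ℝ) → (Fin 4 → ℝ) → (Fin 4 → ℝ) → ℝ)
    (hRt : ∀ x y z u, Rt x y z u
      = gt (nt x (nt y z) - nt y (nt x z) - nt (br l1 l2 l3 l4 x y) z) u)
    :
    Rt (e 0) (e 1) (e 1) (e 0) = l1*l3 + l2*l4 ∧
    Rt (e 0) (e 3) (e 3) (e 0) = -(l1*l3 + l2*l4) ∧
    Rt (e 1) (e 2) (e 2) (e 1) = -(l1*l3 + l2*l4) ∧
    Rt (e 2) (e 3) (e 3) (e 2) = l1*l3 + l2*l4 ∧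
    Rt (e 0) (e 2) (e 2) (e 0) = -(1/2) * (l2*l4) ∧
    Rt (e 1) (e 3) (e 3) (e 1) = -(1/2) * (l1*l3) := by
  obtain rfl := eq_koszulConn l1 l2 l3 l4 nt hnt_tor hnt_met
  simp only [hRt]
  refine ⟨?_, ?_, ?_, ?_, ?_, ?_⟩ <;>
    simp only [koszulConn, br, gt, gm, Jm, e, Pi.sub_apply, Pi.single_apply, Fin.reduceAdd,
      Fin.reduceEq, Fin.isValue, Matrix.cons_val, Matrix.cons_val_zero, Matrix.cons_val_one,
      ↓reduceIte, mul_zero, zero_mul, mul_one, add_zero, zero_add, sub_zero, zero_sub] <;>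
    ring

/-- Components of the curvature tensor `R̃` of the associated metric `g̃`:
`R̃₁₂₂₁ = −R̃₁₄₄₁ = −R̃₂₃₃₂ = R̃₃₄₄₃ = λ₁λ₃ + λ₂λ₄`, `R̃₁₃₃₁ = −½λ₂λ₄`,
`R̃₂₄₄₂ = −½λ₁λ₃`. -/
theorem stmt_16 (l1 l2 l3 l4 : ℝ)
    -- `nt` is the Levi-Civita connection `∇̃` of the (left-invariant) metric `g̃`:
    -- the unique bilinear, torsion-free, `g̃`-compatible connection on the Lie algebra
    (nt : (Fin 4 → ℝ) → (Fin 4 → ℝ) → (Fin 4 → ℝ))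
    (hnt_addl : ∀ x y z, nt (x + y) z = nt x z + nt y z)
    (hnt_smull : ∀ (c : ℝ) x z, nt (c • x) z = c • nt x z)
    (hnt_addr : ∀ x y z, nt x (y + z) = nt x y + nt x z)
    (hnt_smulr : ∀ (c : ℝ) x y, nt x (c • y) = c • nt x y)
    (hnt_tor : ∀ x y, nt x y - nt y x = br l1 l2 l3 l4 x y)
    (hnt_met : ∀ x y z, gt (nt x y) z + gt y (nt x z) = 0)
    -- the (0,4)-curvature tensor `R̃(x,y,z,u) = g̃(R̃(x,y)z, u)` of `∇̃`
    (Rt : (Fin 4 → ℝ) → (Fin 4 → ℝ) → (Fin 4 → ℝ) → (Fin 4 → ℝ) → ℝ)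
    (hRt : ∀ x y z u, Rt x y z u
      = gt (nt x (nt y z) - nt y (nt x z) - nt (br l1 l2 l3 l4 x y) z) u)
    :
    Rt (e 0) (e 1) (e 1) (e 0) = l1*l3 + l2*l4 ∧
    Rt (e 0) (e 3) (e 3) (e 0) = -(l1*l3 + l2*l4) ∧
    Rt (e 1) (e 2) (e 2) (e 1) = -(l1*l3 + l2*l4) ∧
    Rt (e 2) (e 3) (e 3) (e 2) = l1*l3 + l2*l4 ∧
    Rt (e 0) (e 2) (e 2) (e 0) = -(1/2) * (l2*l4) ∧
    Rt (e 1) (e 3) (e 3) (e 1) = -(1/2) * (l1*l3) :=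
  stmt_16_general l1 l2 l3 l4 nt hnt_tor hnt_met Rt hRt

end
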